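/- Let δ = −A²−A⁻² and μ = A⁻⁴+1+A⁴ in the fraction field of ℤ[A,A⁻¹], and let Θ, H be polynomial variables. Define P = (1/(A⁸μ))Θ² − (2/(A⁸δμ))ΘH − ((1+A⁸)/(A⁶δμ))H², Q = −(1/(δμ))Θ² + ((A⁻⁶+A⁶)/(δμ))HΘ + ((A⁻⁴+A⁴)/(δμ))H², α = (δH−Θ)/(δμ), β = (δΘ−H)/(δμ). Then (A²/δ)·Θ·P + Θ·P + (α·Q + β·P) + (1/(A²δ))·Θ·P equals (1/(δ²μ²))·[(A⁻¹²+2A⁻⁸+A⁻⁴+1)Θ³ + (3A⁻¹⁰−A⁶+2A⁻⁶+A²+A⁻²)Θ²H + (−A⁸+2A⁻⁸−A⁴−A⁻⁴+1)ΘH² + (−A⁶−A⁻²)H³]. -/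

import Mathlib

/-!
The three `Θ * P` terms carry the total coefficient `(A² + δ + A⁻²) / δ = 0`, so the left side is
just `α * Q + β * P`; clearing the denominators turns the remaining claim into a polynomial
identity in `A`, `A⁻¹`, `Θ`, `H`. Clearing them is legitimate because `A`, `δ` and `μ` are images
of nonzero Laurent polynomials under the injective map into the fraction field.
-/

open LaurentPolynomial

section LaurentVariable

variable {σ R K : Type*} [CommRing R] [Field K] [Algebra (MvPolynomial σ R[T;T⁻¹]) K]

theorem algebraMap_C_ne_zero [IsFractionRing (MvPolynomial σ R[T;T⁻¹]) K] {p : R[T;T⁻¹]}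
    (hp : p ≠ 0) : algebraMap (MvPolynomial σ R[T;T⁻¹]) K (MvPolynomial.C p) ≠ 0 := by
  rw [ne_eq, map_eq_zero_iff _ (IsFractionRing.injective _ K), MvPolynomial.C_eq_zero]
  exact hp

theorem algebraMap_C_T_inv (n : ℤ) :
    (algebraMap (MvPolynomial σ R[T;T⁻¹]) K (MvPolynomial.C (T n)))⁻¹ =
      algebraMap (MvPolynomial σ R[T;T⁻¹]) K (MvPolynomial.C (T (-n))) := by
  rw [inv_eq_of_mul_eq_one_right]
  rw [← map_mul, ← map_mul, ← T_add, add_neg_cancel, T_zero, map_one, map_one]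

variable [IsFractionRing (MvPolynomial σ R[T;T⁻¹]) K] [Nontrivial R]

theorem neg_sq_sub_inv_sq_ne_zero {a : K}
    (ha : a = algebraMap (MvPolynomial σ R[T;T⁻¹]) K (MvPolynomial.C (T 1))) :
    -a ^ 2 - a⁻¹ ^ 2 ≠ 0 := by
  have hmap : -a ^ 2 - a⁻¹ ^ 2 =
      algebraMap (MvPolynomial σ R[T;T⁻¹]) K (MvPolynomial.C (-T 2 - T (-2))) := by
    simp [ha, algebraMap_C_T_inv, ← map_pow, T_pow]
  rw [hmap]
  exact algebraMap_C_ne_zero fun h => by simpa using congrArg (·.coeff 2) h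

theorem inv_pow_four_add_one_add_pow_four_ne_zero {a : K}
    (ha : a = algebraMap (MvPolynomial σ R[T;T⁻¹]) K (MvPolynomial.C (T 1))) :
    a⁻¹ ^ 4 + 1 + a ^ 4 ≠ 0 := by
  have hmap : a⁻¹ ^ 4 + 1 + a ^ 4 =
      algebraMap (MvPolynomial σ R[T;T⁻¹]) K (MvPolynomial.C (T (-4) + 1 + T 4)) := by
    simp [ha, algebraMap_C_T_inv, ← map_pow, T_pow]
  rw [hmap]
  exact algebraMap_C_ne_zero fun h => by simpa using congrArg (·.coeff 0) h

end LaurentVariable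

section FieldIdentity

variable {K : Type*} [Field K]

theorem sq_div_add_one_add_one_div_sq_mul_eq_zero {A δ : K} (hA : A ≠ 0) (hδ0 : δ ≠ 0)
    (hδ : δ = -A ^ 2 - A⁻¹ ^ 2) : A ^ 2 / δ + 1 + 1 / (A ^ 2 * δ) = 0 := by
  have hA2δ : A ^ 2 * δ = -A ^ 4 - 1 := by
    rw [hδ]
    field_simp
  field_simp
  linear_combination hA2δ

theorem alpha_mul_Q_add_beta_mul_P {A Θ H δ μ P Q α β : K} (hA : A ≠ 0) (hδ0 : δ ≠ 0)
    (hμ0 : μ ≠ 0) (hδ : δ = -A ^ 2 - A⁻¹ ^ 2)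
    (hP : P = (1 / (A ^ 8 * μ)) * Θ ^ 2 - (2 / (A ^ 8 * δ * μ)) * (Θ * H)
            - ((1 + A ^ 8) / (A ^ 6 * δ * μ)) * H ^ 2)
    (hQ : Q = -(1 / (δ * μ)) * Θ ^ 2 + ((A⁻¹ ^ 6 + A ^ 6) / (δ * μ)) * (H * Θ)
            + ((A⁻¹ ^ 4 + A ^ 4) / (δ * μ)) * H ^ 2)
    (hα : α = (δ * H - Θ) / (δ * μ)) (hβ : β = (δ * Θ - H) / (δ * μ)) :
    α * Q + β * P
      = (1 / (δ ^ 2 * μ ^ 2)) *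
        ((A⁻¹ ^ 12 + 2 * A⁻¹ ^ 8 + A⁻¹ ^ 4 + 1) * Θ ^ 3
          + (3 * A⁻¹ ^ 10 - A ^ 6 + 2 * A⁻¹ ^ 6 + A ^ 2 + A⁻¹ ^ 2) * (Θ ^ 2 * H)
          + (-A ^ 8 + 2 * A⁻¹ ^ 8 - A ^ 4 - A⁻¹ ^ 4 + 1) * (Θ * H ^ 2)
          + (-A ^ 6 - A⁻¹ ^ 2) * H ^ 3) := by
  subst hP hQ hα hβ
  field_simp
  subst hδ
  field_simp
  ring

end FieldIdentity

theorem stmt_8_general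
    (K : Type*) [Field K]
    [Algebra (MvPolynomial (Fin 2) (LaurentPolynomial ℤ)) K]
    [IsFractionRing (MvPolynomial (Fin 2) (LaurentPolynomial ℤ)) K]
    (A Θ H : K)
    (hA : A = algebraMap (MvPolynomial (Fin 2) (LaurentPolynomial ℤ)) K
            (MvPolynomial.C (T 1)))
    (δ μ : K)
    (hδ : δ = -A ^ 2 - A⁻¹ ^ 2)
    (hμ : μ = A⁻¹ ^ 4 + 1 + A ^ 4)
    (P Q α β : K)
    (hP : P = (1 / (A ^ 8 * μ)) * Θ ^ 2 - (2 / (A ^ 8 * δ * μ)) * (Θ * H)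
            - ((1 + A ^ 8) / (A ^ 6 * δ * μ)) * H ^ 2)
    (hQ : Q = -(1 / (δ * μ)) * Θ ^ 2 + ((A⁻¹ ^ 6 + A ^ 6) / (δ * μ)) * (H * Θ)
            + ((A⁻¹ ^ 4 + A ^ 4) / (δ * μ)) * H ^ 2)
    (hα : α = (δ * H - Θ) / (δ * μ))
    (hβ : β = (δ * Θ - H) / (δ * μ)) :
    (A ^ 2 / δ) * (Θ * P) + Θ * P + (α * Q + β * P) + (1 / (A ^ 2 * δ)) * (Θ * P)
      = (1 / (δ ^ 2 * μ ^ 2)) *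
        ((A⁻¹ ^ 12 + 2 * A⁻¹ ^ 8 + A⁻¹ ^ 4 + 1) * Θ ^ 3
          + (3 * A⁻¹ ^ 10 - A ^ 6 + 2 * A⁻¹ ^ 6 + A ^ 2 + A⁻¹ ^ 2) * (Θ ^ 2 * H)
          + (-A ^ 8 + 2 * A⁻¹ ^ 8 - A ^ 4 - A⁻¹ ^ 4 + 1) * (Θ * H ^ 2)
          + (-A ^ 6 - A⁻¹ ^ 2) * H ^ 3) := by
  have hA0 : A ≠ 0 := hA ▸ algebraMap_C_ne_zero (isUnit_T 1).ne_zero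
  have hδ0 : δ ≠ 0 := hδ ▸ neg_sq_sub_inv_sq_ne_zero hA
  have hμ0 : μ ≠ 0 := hμ ▸ inv_pow_four_add_one_add_pow_four_ne_zero hA
  linear_combination (Θ * P) * sq_div_add_one_add_one_div_sq_mul_eq_zero hA0 hδ0 hδ
    + alpha_mul_Q_add_beta_mul_P hA0 hδ0 hμ0 hδ hP hQ hα hβ

theorem stmt_8
    (K : Type*) [Field K]
    [Algebra (MvPolynomial (Fin 2) (LaurentPolynomial ℤ)) K]
    [IsFractionRing (MvPolynomial (Fin 2) (LaurentPolynomial ℤ)) K]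
    (A Θ H : K)
    (hA : A = algebraMap (MvPolynomial (Fin 2) (LaurentPolynomial ℤ)) K
            (MvPolynomial.C (T 1)))
    (hΘ : Θ = algebraMap (MvPolynomial (Fin 2) (LaurentPolynomial ℤ)) K
            (MvPolynomial.X 0))
    (hH : H = algebraMap (MvPolynomial (Fin 2) (LaurentPolynomial ℤ)) K
            (MvPolynomial.X 1))
    (δ μ : K)
    (hδ : δ = -A ^ 2 - A⁻¹ ^ 2)
    (hμ : μ = A⁻¹ ^ 4 + 1 + A ^ 4)
    (P Q α β : K)
    (hP : P = (1 / (A ^ 8 * μ)) * Θ ^ 2 - (2 / (A ^ 8 * δ * μ)) * (Θ * H)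
            - ((1 + A ^ 8) / (A ^ 6 * δ * μ)) * H ^ 2)
    (hQ : Q = -(1 / (δ * μ)) * Θ ^ 2 + ((A⁻¹ ^ 6 + A ^ 6) / (δ * μ)) * (H * Θ)
            + ((A⁻¹ ^ 4 + A ^ 4) / (δ * μ)) * H ^ 2)
    (hα : α = (δ * H - Θ) / (δ * μ))
    (hβ : β = (δ * Θ - H) / (δ * μ)) :
    (A ^ 2 / δ) * (Θ * P) + Θ * P + (α * Q + β * P) + (1 / (A ^ 2 * δ)) * (Θ * P)
      = (1 / (δ ^ 2 * μ ^ 2)) *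
        ((A⁻¹ ^ 12 + 2 * A⁻¹ ^ 8 + A⁻¹ ^ 4 + 1) * Θ ^ 3
          + (3 * A⁻¹ ^ 10 - A ^ 6 + 2 * A⁻¹ ^ 6 + A ^ 2 + A⁻¹ ^ 2) * (Θ ^ 2 * H)
          + (-A ^ 8 + 2 * A⁻¹ ^ 8 - A ^ 4 - A⁻¹ ^ 4 + 1) * (Θ * H ^ 2)
          + (-A ^ 6 - A⁻¹ ^ 2) * H ^ 3) :=
  stmt_8_general K A Θ H hA δ μ hδ hμ P Q α β hP hQ hα hβ
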